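/- Let T(F, υ, κ) := F ⊙ (d̃_M(υ, κ) 1_{1,N}) be the column-wise phase-shift of a matrix F ∈ ℂ^{M×N}. Then for any F ∈ ℂ^{M×N}, v ∈ ℂ^N, and shifts Δ_h, Δ_v: G(ψ_h, ψ_v, F v) = G(ψ_h + Δ_h, ψ_v + Δ_v, T(F, Δ_h, Δ_v) v), i.e., multiplying each column of F entrywise by the unit-modulus steering vector d̃_M(Δ_h, Δ_v) shifts the beam pattern by (Δ_h, Δ_v). -/

import Mathlib

open scoped Real ComplexConjugate

/-- Normalized array response vector `d_{M_a}(ψ)`. -/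
noncomputable def arrayVec (Ma : ℕ) (ψ : ℝ) : Fin Ma → ℂ :=
  fun m => Complex.exp (Complex.I * ((m : ℕ) : ℂ) * (ψ : ℂ)) / (Real.sqrt Ma : ℂ)

/-- The entrywise-unit-modulus steering vector `d̃_M(ψ_h, ψ_v) = √M · d_M(ψ_h, ψ_v)`. -/
noncomputable def steerVec (Mh Mv : ℕ) (ψh ψv : ℝ) : Fin Mh × Fin Mv → ℂ :=
  fun p => (Real.sqrt (Mh * Mv) : ℂ) * (arrayVec Mh ψh p.1 * arrayVec Mv ψv p.2)

/-- Reference gain `G(ψ_h, ψ_v, c) = |(d_{M_h}(ψ_h) ⊗ d_{M_v}(ψ_v))^H c|²`. -/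
noncomputable def refGain (Mh Mv : ℕ) (ψh ψv : ℝ) (c : Fin Mh × Fin Mv → ℂ) : ℝ :=
  ‖∑ p : Fin Mh × Fin Mv,
    conj (arrayVec Mh ψh p.1 * arrayVec Mv ψv p.2) * c p‖ ^ 2

/-- Column-wise phase shift `T(F, υ, κ) = F ⊙ (d̃_M(υ, κ) 1_{1,N})`. -/
noncomputable def phaseShift (Mh Mv N : ℕ) (F : Fin Mh × Fin Mv → Fin N → ℂ)
    (υ κ : ℝ) : Fin Mh × Fin Mv → Fin N → ℂ :=
  fun p n => F p n * steerVec Mh Mv υ κ p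

/-!
Shifting `ψ` by `Δ` multiplies the `m`-th entry of `d(ψ)` by the unit phase `e^{imΔ}`, which is
the `m`-th entry of `d̃(Δ)`. Hence each term `conj(d(ψ + Δ)_p) · d̃(Δ)_p · c_p` of the shifted gain
equals the term `conj(d(ψ)_p) · c_p` of the original one.
-/

open Complex

lemma arrayVec_add (Ma : ℕ) (ψ Δ : ℝ) (m : Fin Ma) :
    arrayVec Ma (ψ + Δ) m = exp (↑(Δ * m) * I) * arrayVec Ma ψ m := by
  simp only [arrayVec, mul_div_assoc', ← exp_add]
  push_cast
  ring_nf

lemma ofReal_sqrt_mul_arrayVec (Ma : ℕ) (ψ : ℝ) (m : Fin Ma) :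
    (Real.sqrt Ma : ℂ) * arrayVec Ma ψ m = exp (↑(ψ * m) * I) := by
  have hsqrt : (Real.sqrt Ma : ℂ) ≠ 0 := by
    exact_mod_cast (Real.sqrt_pos.mpr (Nat.cast_pos.mpr m.pos)).ne'
  rw [arrayVec, mul_div_cancel₀ _ hsqrt]
  push_cast
  ring_nf

lemma steerVec_apply (Mh Mv : ℕ) (υ κ : ℝ) (p : Fin Mh × Fin Mv) :
    steerVec Mh Mv υ κ p = exp (↑(υ * p.1) * I) * exp (↑(κ * p.2) * I) := by
  rw [steerVec, Real.sqrt_mul (Nat.cast_nonneg _), ofReal_mul,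
    ← ofReal_sqrt_mul_arrayVec Mh υ p.1, ← ofReal_sqrt_mul_arrayVec Mv κ p.2]
  ring

lemma conj_arrayVec_add_mul_steerVec (Mh Mv : ℕ) (ψh ψv Δh Δv : ℝ) (p : Fin Mh × Fin Mv) :
    conj (arrayVec Mh (ψh + Δh) p.1 * arrayVec Mv (ψv + Δv) p.2) * steerVec Mh Mv Δh Δv p
      = conj (arrayVec Mh ψh p.1 * arrayVec Mv ψv p.2) := by
  set u := exp (↑(Δh * p.1) * I) * exp (↑(Δv * p.2) * I)
  have hu : conj u * u = 1 := by
    rw [conj_mul', norm_mul, norm_exp_ofReal_mul_I, norm_exp_ofReal_mul_I]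
    norm_num
  calc conj (arrayVec Mh (ψh + Δh) p.1 * arrayVec Mv (ψv + Δv) p.2) * steerVec Mh Mv Δh Δv p
      = conj (arrayVec Mh ψh p.1 * arrayVec Mv ψv p.2) * (conj u * u) := by
        rw [arrayVec_add, arrayVec_add, steerVec_apply, map_mul, map_mul, map_mul, map_mul,
          map_mul]
        ring
    _ = conj (arrayVec Mh ψh p.1 * arrayVec Mv ψv p.2) := by rw [hu, mul_one]

theorem refGain_phaseShift_general (Mh Mv N : ℕ)
    (F : Fin Mh × Fin Mv → Fin N → ℂ) (v : Fin N → ℂ) (ψh ψv Δh Δv : ℝ) :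
    refGain Mh Mv ψh ψv (fun p => ∑ n : Fin N, F p n * v n)
      = refGain Mh Mv (ψh + Δh) (ψv + Δv)
          (fun p => ∑ n : Fin N, phaseShift Mh Mv N F Δh Δv p n * v n) := by
  have hcol (p : Fin Mh × Fin Mv) :
      ∑ n : Fin N, phaseShift Mh Mv N F Δh Δv p n * v n
        = steerVec Mh Mv Δh Δv p * ∑ n : Fin N, F p n * v n := by
    simp only [phaseShift, Finset.mul_sum]
    exact Finset.sum_congr rfl fun n _ => by ring
  simp only [refGain, hcol, ← mul_assoc, conj_arrayVec_add_mul_steerVec]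

/-- Lemma 4 (beam-shift identity): multiplying each column of `F` entrywise by the
unit-modulus steering vector `d̃_M(Δ_h, Δ_v)` shifts the beam pattern by `(Δ_h, Δ_v)`:
`G(ψ_h, ψ_v, F v) = G(ψ_h + Δ_h, ψ_v + Δ_v, T(F, Δ_h, Δ_v) v)`. -/
theorem refGain_phaseShift (Mh Mv N : ℕ) (hMh : 0 < Mh) (hMv : 0 < Mv)
    (F : Fin Mh × Fin Mv → Fin N → ℂ) (v : Fin N → ℂ) (ψh ψv Δh Δv : ℝ) :
    refGain Mh Mv ψh ψv (fun p => ∑ n : Fin N, F p n * v n)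
      = refGain Mh Mv (ψh + Δh) (ψv + Δv)
          (fun p => ∑ n : Fin N, phaseShift Mh Mv N F Δh Δv p n * v n) :=
  refGain_phaseShift_general Mh Mv N F v ψh ψv Δh Δv
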